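/- arXiv:1401.6045 — 11 statements merged into one kernel-verified Lean document; each statement's English description precedes it below -/
import Mathlib

section
/- In a *-ring with proper involution, the star order relation ≤*, defined by x ≤* y iff x* x = x* y and x x* = y x*, is a partial order (reflexive, antisymmetric, transitive). -/
/-- In a *-ring with proper involution, the star order is a partial order. -/
theorem star_order_isPartialOrder {R : Type*} [Ring R] [StarRing R]
    (hprop : ∀ x : R, star x * x = 0 → x = 0) :
    IsPartialOrder R
      (fun x y => star x * x = star x * y ∧ x * star x = y * star x) := by
  refine { refl := fun x => ⟨rfl, rfl⟩, trans := ?_, antisymm := ?_ }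
  · rintro a b c ⟨h1, h2⟩ ⟨h3, h4⟩
    -- basic consequences
    have had : star a * (b - a) = 0 := by rw [mul_sub, ← h1, sub_self]
    have hda : (b - a) * star a = 0 := by rw [sub_mul, ← h2, sub_self]
    have hbe : star b * (c - b) = 0 := by rw [mul_sub, ← h3, sub_self]
    have heb : (c - b) * star b = 0 := by rw [sub_mul, ← h4, sub_self]
    have hast : a * star (b - a) = 0 := by
      have := congrArg star hda
      simpa using this
    have hsta : star (b - a) * a = 0 := by
      have := congrArg star had
      simpa using this
    -- first component : star a * c = star a * b
    have hu : star a * (c - b) = - (star (b - a) * (c - b)) := by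
      rw [star_sub, sub_mul, hbe]; simp
    have hu0 : star a * (c - b) = 0 := by
      apply hprop
      have hstu : star (star a * (c - b)) = star (c - b) * a := by simp
      rw [hstu, hu, mul_neg]
      have : star (c - b) * a * (star (b - a) * (c - b))
          = star (c - b) * (a * star (b - a)) * (c - b) := by noncomm_ring
      rw [this, hast, mul_zero, zero_mul, neg_zero]
    -- second component : c * star a = b * star a
    have hv0 : (c - b) * star a = 0 := by
      have hv : (c - b) * star a = - ((c - b) * star (b - a)) := by
        rw [star_sub, mul_sub, heb]; simp
      have key : ((c - b) * star a) * star ((c - b) * star a) = 0 := by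
        have hstv : star ((c - b) * star a) = a * star (c - b) := by simp
        rw [hstv, hv, neg_mul]
        have : (c - b) * star (b - a) * (a * star (c - b))
            = (c - b) * (star (b - a) * a) * star (c - b) := by noncomm_ring
        rw [this, hsta, mul_zero, zero_mul, neg_zero]
      have : star ((c - b) * star a) = 0 := by
        apply hprop
        simpa using key
      have := congrArg star this
      simpa using this
    rw [mul_sub, sub_eq_zero] at hu0
    rw [sub_mul, sub_eq_zero] at hv0
    exact ⟨h1.trans hu0.symm, h2.trans hv0.symm⟩
  · rintro a b ⟨h1, h2⟩ ⟨h3, h4⟩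
    have : star (b - a) * (b - a) = 0 := by
      rw [star_sub, sub_mul, mul_sub, mul_sub, ← h1, ← h3]
      abel
    exact (sub_eq_zero.mp (hprop _ this)).symm
end

section
/- In a Rickart *-ring, if e is a projection with e ≤ a'' (i.e. a'' e = e), then (a e)'' = e. -/
/-- In a Rickart *-ring, if `e` is a projection with `e ≤ a''`, then `(a e)'' = e`. -/
theorem rickart_rp_mul_proj {R : Type*} [Ring R] [StarRing R]
    (p : R → R)
    (hproj : ∀ x : R, star (p x) = p x ∧ p x * p x = p x)
    (hann : ∀ x y : R, x * y = 0 ↔ y = p x * y)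
    (a e : R) (he : star e = e ∧ e * e = e)
    (hle : p (p a) * e = e) : p (p (a * e)) = e := by
  have hstar : ∀ x : R, star (p x) = p x := fun x => (hproj x).1
  have hid : ∀ x : R, p x * p x = p x := fun x => (hproj x).2
  have hxp : ∀ x : R, x * p x = 0 := fun x => (hann x (p x)).mpr (hid x).symm
  -- equal right annihilators give equal p
  have hC : ∀ u v : R, (∀ y, u * y = 0 ↔ v * y = 0) → p u = p v := by
    intro u v h
    have h1 : p u = p v * p u := (hann v (p u)).mp ((h (p u)).mp (hxp u))
    have h2 : p v = p u * p v := (hann u (p v)).mp ((h (p v)).mpr (hxp v))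
    calc p u = star (p u) := (hstar u).symm
      _ = star (p v * p u) := by rw [← h1]
      _ = p u * p v := by rw [star_mul, hstar, hstar]
      _ = p v := h2.symm
  have hA' : ∀ x : R, p (p x) * p x = 0 := by
    intro x
    have h := congrArg star (hxp (p x))
    simpa [star_mul, hstar] using h
  have hB : ∀ x : R, x * p (p x) = x := by
    intro x
    have h1 : p x * star x = 0 := by
      have h := congrArg star (hxp x)
      simpa [star_mul, hstar] using h
    have h2 : star x = p (p x) * star x := (hann (p x) (star x)).mp h1
    have h3 := congrArg star h2
    simpa [star_mul, hstar] using h3.symm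
  have hD : ∀ x z : R, x * z = 0 ↔ p (p x) * z = 0 := by
    intro x z
    constructor
    · intro h
      have hz := (hann x z).mp h
      rw [hz, ← mul_assoc, hA' x, zero_mul]
    · intro h
      calc x * z = x * p (p x) * z := by rw [hB]
        _ = x * (p (p x) * z) := by rw [mul_assoc]
        _ = 0 := by rw [h, mul_zero]
  have hkey : p (a * e) = p (p (p a) * e) := by
    apply hC
    intro y
    rw [mul_assoc, mul_assoc, hD a (e * y)]
  have hmain : p (p (a * e)) = p (p e) := by rw [hkey, hle]
  -- now show p (p e) = e for the projection e
  have hee : e * p (p e) = e := hB e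
  have hee' : p (p e) * e = e := by
    have h := congrArg star hee
    simpa [star_mul, hstar, he.1] using h
  set y : R := p (p e) - e * p (p e) with hy
  have hey : e * y = 0 := by
    rw [hy, mul_sub, ← mul_assoc, he.2, sub_self]
  have h1 : y = p e * y := (hann e y).mp hey
  have h2 : p (p e) * y = y := by
    rw [hy, mul_sub, hid, ← mul_assoc, hee']
  have h3 : y = 0 := by
    rw [← h2, h1, ← mul_assoc, hA' e, zero_mul]
  have h4 : p (p e) = e := by
    have h3' : p (p e) - e * p (p e) = 0 := h3
    have h5 : p (p e) = e * p (p e) := sub_eq_zero.mp h3'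
    rw [h5, hee]
  rw [hmain, h4]
end

section
/- In a *-ring with proper involution, if a is *-orthogonal to b (a b* = 0 = a* b), then a + b is the least upper bound of a and b in the star order, and 0 is their greatest lower bound. -/
/-- In a *-ring with proper involution, if `a ⊥ b` then `a + b` is the least
upper bound and `0` the greatest lower bound of `a` and `b` in the star order. -/
theorem orth_sup_inf {R : Type*} [Ring R] [StarRing R]
    (hprop : ∀ x : R, star x * x = 0 → x = 0)
    (le : R → R → Prop)
    (hle : ∀ x y, le x y ↔ star x * x = star x * y ∧ x * star x = y * star x)
    (a b : R) (horth : a * star b = 0 ∧ star a * b = 0) :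
    (le a (a + b) ∧ le b (a + b) ∧ ∀ z, le a z → le b z → le (a + b) z) ∧
    (le 0 a ∧ le 0 b ∧ ∀ z, le z a → le z b → le z 0) := by
  obtain ⟨hab, hab'⟩ := horth
  have hba : star b * a = 0 := by
    have := congrArg star hab'
    simpa using this
  have hba' : b * star a = 0 := by
    have := congrArg star hab
    simpa using this
  refine ⟨⟨?_, ?_, ?_⟩, ?_, ?_, ?_⟩
  · rw [hle]
    constructor
    · rw [mul_add, hab', add_zero]
    · rw [add_mul, hba', add_zero]
  · rw [hle]
    constructor
    · rw [mul_add, hba, zero_add]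
    · rw [add_mul, hab, zero_add]
  · intro z haz hbz
    rw [hle] at haz hbz ⊢
    obtain ⟨h1, h2⟩ := haz
    obtain ⟨h3, h4⟩ := hbz
    constructor
    · rw [star_add, add_mul, mul_add, mul_add, hab', hba, h1, h3, add_mul]
      abel
    · rw [star_add, mul_add, add_mul, add_mul, hba', hab, h2, h4, mul_add]
      abel
  · rw [hle]; simp
  · rw [hle]; simp
  · intro z hza hzb
    rw [hle] at hza hzb ⊢
    obtain ⟨h1, h2⟩ := hza
    obtain ⟨h3, h4⟩ := hzb
    have hzb' : z * star z = z * star b := by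
      have := congrArg star h4
      simpa [mul_assoc] using this
    have key : star z * z * (star z * z) = 0 := by
      calc star z * z * (star z * z) = star z * (z * star z) * z := by
            simp [mul_assoc]
        _ = star z * (z * star b) * z := by rw [hzb']
        _ = star z * z * (star b * z) := by simp [mul_assoc]
        _ = star z * a * (star b * z) := by rw [h1]
        _ = 0 := by
            rw [mul_assoc (star z) a, ← mul_assoc a, hab, zero_mul, mul_zero]
    have hzz : star z * z = 0 := by
      have := hprop (star z * z) (by simpa using key)
      exact this
    have hz0 : z = 0 := hprop z hzz
    simp [hz0]
end

section
/- In a Rickart *-ring, for elements a, b the following are equivalent: (i) a a* = b a*; (ii) b = a + c for some c with c a* = 0; (iii) a = b a''; (iv) a = b e for some projection e. -/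
/-- In a Rickart *-ring, the four conditions of Lemma on `a a* = b a*` are
equivalent. -/
theorem rickart_lemma_tfae {R : Type*} [Ring R] [StarRing R]
    (p : R → R)
    (hproj : ∀ x : R, star (p x) = p x ∧ p x * p x = p x)
    (hann : ∀ x y : R, x * y = 0 ↔ y = p x * y)
    (a b : R) :
    List.TFAE [a * star a = b * star a,
               ∃ c, b = a + c ∧ c * star a = 0,
               a = b * p (p a),
               ∃ e, (star e = e ∧ e * e = e) ∧ a = b * e] := by
  -- x * p x = 0 for all x
  have hxp : ∀ x : R, x * p x = 0 := fun x => (hann x (p x)).mpr (hproj x).2.symm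
  -- a = a * p (p a)
  have haa : ∀ x : R, x = x * p (p x) := by
    intro x
    have h1 : p x * star x = 0 := by
      have := congrArg star (hxp x)
      simpa [star_mul, (hproj x).1] using this
    have h2 : star x = p (p x) * star x := (hann (p x) (star x)).mp h1
    have := congrArg star h2
    simpa [star_mul, (hproj (p x)).1] using this
  tfae_have 1 → 2
  · intro h
    exact ⟨b - a, by abel, by rw [sub_mul, h, sub_self]⟩
  tfae_have 2 → 3
  · rintro ⟨c, rfl, hc⟩
    have h1 : a * star c = 0 := by
      have := congrArg star hc
      simpa [star_mul] using this
    have h2 : star c = p a * star c := (hann a (star c)).mp h1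
    have h3 : c = c * p a := by
      have := congrArg star h2
      simpa [star_mul, (hproj a).1] using this
    have h4 : c * p (p a) = 0 := by
      rw [h3, mul_assoc, hxp (p a), mul_zero]
    rw [add_mul, h4, add_zero, ← haa a]
  tfae_have 3 → 4
  · intro h
    exact ⟨p (p a), ⟨(hproj (p a)).1, (hproj (p a)).2⟩, h⟩
  tfae_have 4 → 1
  · rintro ⟨e, ⟨he1, he2⟩, rfl⟩
    have he3 : ∀ y : R, e * (e * y) = e * y := fun y => by rw [← mul_assoc, he2]
    simp [star_mul, he1, mul_assoc, he3]
  tfae_finish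
end

section
/- In a Rickart *-ring with proper involution, a ≤* b if and only if b a'' = a and (a*)'' b = a. -/
/-- In a Rickart *-ring with proper involution,
`a ≤* b` iff `b a'' = a` and `(a*)'' b = a`. -/
theorem star_le_iff_rp {R : Type*} [Ring R] [StarRing R]
    (hprop : ∀ x : R, star x * x = 0 → x = 0)
    (p : R → R)
    (hproj : ∀ x : R, star (p x) = p x ∧ p x * p x = p x)
    (hann : ∀ x y : R, x * y = 0 ↔ y = p x * y)
    (a b : R) :
    (star a * a = star a * b ∧ a * star a = b * star a) ↔
      (b * p (p a) = a ∧ p (p (star a)) * b = a) := by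
  have hx' : ∀ x : R, x * p x = 0 := fun x => (hann x (p x)).mpr ((hproj x).2).symm
  have hx'' : ∀ x : R, p x * star x = 0 := by
    intro x
    have := congrArg star (hx' x)
    rwa [star_mul, (hproj x).1, star_zero] at this
  have hpp : ∀ x : R, p (p x) = 1 - p x := by
    intro x
    have h1 : p x * (1 - p x) = 0 := by rw [mul_sub, mul_one, (hproj x).2, sub_self]
    have h2 : 1 - p x = p (p x) * (1 - p x) := (hann (p x) _).mp h1
    have h3 : p (p x) * p x = 0 := by
      have := hx'' (p x)
      rwa [(hproj x).1] at this
    rw [mul_sub, mul_one, h3, sub_zero] at h2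
    exact h2.symm
  have hsa : ∀ x : R, p (star x) * x = 0 := by
    intro x
    have := hx'' (star x)
    rwa [star_star] at this
  constructor
  · rintro ⟨h1, h2⟩
    have e1 : star a * (b - a) = 0 := by rw [mul_sub, ← h1, sub_self]
    have e2 : (b - a) * star a = 0 := by rw [sub_mul, ← h2, sub_self]
    have e2' : a * star (b - a) = 0 := by
      have := congrArg star e2
      rwa [star_mul, star_star, star_zero] at this
    have f2 : star (b - a) = p a * star (b - a) := (hann a _).mp e2'
    have f2' : b - a = (b - a) * p a := by
      have := congrArg star f2
      rwa [star_mul, star_star, (hproj a).1] at this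
    have f1 : b - a = p (star a) * (b - a) := (hann (star a) _).mp e1
    constructor
    · have hba : b * p a = b - a := by
        have h : (b - a) * p a = b * p a - a * p a := sub_mul ..
        rw [hx' a, sub_zero] at h
        rw [← h, ← f2']
      rw [hpp, mul_sub, mul_one, hba, sub_sub_cancel]
    · have hba : p (star a) * b = b - a := by
        have h := f1
        rw [mul_sub, hsa a, sub_zero] at h
        exact h.symm
      rw [hpp, sub_mul, one_mul, hba, sub_sub_cancel]
  · rintro ⟨h1, h2⟩
    rw [hpp, mul_sub, mul_one] at h1
    rw [hpp, sub_mul, one_mul] at h2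
    have g1 : b * p a = b - a := by conv_rhs => rw [← h1, sub_sub_cancel]
    have g2 : p (star a) * b = b - a := by conv_rhs => rw [← h2, sub_sub_cancel]
    constructor
    · have h : star a * (b - a) = 0 := by
        rw [← g2, ← mul_assoc, hx' (star a), zero_mul]
      rw [mul_sub] at h
      exact (sub_eq_zero.mp h).symm
    · have hba : (b - a) * p a = b - a := by
        rw [sub_mul, g1, hx' a, sub_zero]
      have h : (b - a) * star a = 0 := by
        calc (b - a) * star a = (b - a) * (p a * star a) := by rw [← mul_assoc, hba]
        _ = 0 := by rw [hx'' a, mul_zero]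
      rw [sub_mul] at h
      exact (sub_eq_zero.mp h).symm
end

section
/- In a Rickart *-ring with proper involution, a ≤* b if and only if there exist projections e and f with f b = a = b e. -/
/-- In a Rickart *-ring with proper involution, `a ≤* b` iff there exist
projections `e, f` with `f b = a = b e`. -/
theorem star_le_iff_proj {R : Type*} [Ring R] [StarRing R]
    (hprop : ∀ x : R, star x * x = 0 → x = 0)
    (p : R → R)
    (hproj : ∀ x : R, star (p x) = p x ∧ p x * p x = p x)
    (hann : ∀ x y : R, x * y = 0 ↔ y = p x * y)
    (a b : R) :
    (star a * a = star a * b ∧ a * star a = b * star a) ↔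
      ∃ e f : R, (star e = e ∧ e * e = e) ∧ (star f = f ∧ f * f = f) ∧
        f * b = a ∧ b * e = a := by
  constructor
  · rintro ⟨h1, h2⟩
    -- a * p a = 0
    have hap : a * p a = 0 := (hann a (p a)).mpr (hproj a).2.symm
    -- star a * p (star a) = 0, hence p (star a) * a = 0
    have hsap : star a * p (star a) = 0 :=
      (hann (star a) (p (star a))).mpr (hproj (star a)).2.symm
    have hpa : p (star a) * a = 0 := by
      have := congrArg star hsap
      simpa [star_mul, (hproj (star a)).1] using this
    -- (b - a) * star a = 0
    have hr : (b - a) * star a = 0 := by rw [sub_mul, h2, sub_self]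
    -- a * star (b - a) = 0
    have hr' : a * star (b - a) = 0 := by
      have := congrArg star hr
      simpa [star_mul] using this
    have hr'' : star (b - a) = p a * star (b - a) := (hann a _).mp hr'
    have hba : b - a = (b - a) * p a := by
      have := congrArg star hr''
      simpa [star_mul, (hproj a).1] using this
    -- star a * (b - a) = 0
    have hl : star a * (b - a) = 0 := by rw [mul_sub, h1, sub_self]
    have hba' : b - a = p (star a) * (b - a) := (hann (star a) _).mp hl
    refine ⟨1 - p a, 1 - p (star a), ⟨?_, ?_⟩, ⟨?_, ?_⟩, ?_, ?_⟩
    · simp [star_sub, (hproj a).1]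
    · have h := (hproj a).2
      calc (1 - p a) * (1 - p a) = 1 - p a - (p a - p a * p a) := by noncomm_ring
        _ = 1 - p a := by rw [h]; abel
    · simp [star_sub, (hproj (star a)).1]
    · have h := (hproj (star a)).2
      calc (1 - p (star a)) * (1 - p (star a))
          = 1 - p (star a) - (p (star a) - p (star a) * p (star a)) := by noncomm_ring
        _ = 1 - p (star a) := by rw [h]; abel
    · have hpb : p (star a) * b = b - a := by
        calc p (star a) * b = p (star a) * (b - a) + p (star a) * a := by noncomm_ring
          _ = (b - a) + 0 := by rw [← hba', hpa]
          _ = b - a := by abel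
      calc (1 - p (star a)) * b = b - p (star a) * b := by noncomm_ring
        _ = b - (b - a) := by rw [hpb]
        _ = a := by abel
    · have hbp : b * p a = b - a := by
        calc b * p a = (b - a) * p a + a * p a := by noncomm_ring
          _ = (b - a) + 0 := by rw [← hba, hap]
          _ = b - a := by abel
      calc b * (1 - p a) = b - b * p a := by noncomm_ring
        _ = b - (b - a) := by rw [hbp]
        _ = a := by abel
  · rintro ⟨e, f, ⟨he1, he2⟩, ⟨hf1, hf2⟩, hfb, hbe⟩
    constructor
    · have ha : star a = star b * f := by rw [← hfb, star_mul, hf1]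
      rw [ha, ← hfb]
      rw [mul_assoc, ← mul_assoc f f b, hf2, mul_assoc]
    · have ha : star a = e * star b := by rw [← hbe, star_mul, he1]
      rw [ha, ← hbe]
      rw [← mul_assoc, mul_assoc b e e, he2, mul_assoc]
end

section
/- In a Rickart *-ring with proper involution, a ≤* b if and only if a = b a'' and a'' commutes with b* b, and this is also equivalent to: a = b a'' and a* b is self-adjoint. -/
/-!
If `a ≤* b` then `a* b = a* a` is self-adjoint, and `a (b* - a*) = 0`. Every right annihilator
`y = a' y` of `a` is also killed by `a''` (as `a'' a' = 0`), so `a'' (b* - a*) = 0`, whence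
`a = a a'' = b a''`. Conversely, if `a = b e` for a projection `e`, then `a* b = e (b* b)` has
adjoint `(b* b) e`, so `a* b` is self-adjoint exactly when `e` commutes with `b* b`, and that
commutation gives back both equations of `a ≤* b`.
-/

section StarRing

variable {R : Type*} [Ring R] [StarRing R]

def StarLE (a b : R) : Prop :=
  star a * a = star a * b ∧ a * star a = b * star a

theorem StarLE.isSelfAdjoint_star_mul {a b : R} (h : StarLE a b) :
    IsSelfAdjoint (star a * b) := by
  have h' : star b * a = star a * a := by
    simpa only [star_mul, star_star] using (congrArg star h.1).symm
  rw [IsSelfAdjoint, star_mul, star_star, h', h.1]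

theorem commute_star_mul_self_iff_isSelfAdjoint {e a b : R} (he : IsSelfAdjoint e)
    (ha : a = b * e) : Commute e (star b * b) ↔ IsSelfAdjoint (star a * b) := by
  have hl : star a * b = e * (star b * b) := by rw [ha, star_mul, he.star_eq, mul_assoc]
  have hr : star (star a * b) = star b * b * e := by rw [star_mul, star_star, ha, mul_assoc]
  rw [IsSelfAdjoint, hr, hl, Commute, SemiconjBy, eq_comm]

theorem starLE_of_eq_mul_of_commute {e a b : R} (he : IsStarProjection e) (ha : a = b * e)
    (hc : Commute e (star b * b)) : StarLE a b := by
  have hsa : star a = e * star b := by rw [ha, star_mul, he.isSelfAdjoint.star_eq]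
  constructor
  · calc star a * a = e * (star b * b) * e := by rw [hsa, ha]; noncomm_ring
      _ = star b * b * (e * e) := by rw [hc.eq, mul_assoc]
      _ = e * (star b * b) := by rw [he.isIdempotentElem.eq, hc.eq]
      _ = star a * b := by rw [hsa, mul_assoc]
  · calc a * star a = b * (e * e) * star b := by rw [hsa, ha]; noncomm_ring
      _ = b * star a := by rw [he.isIdempotentElem.eq, hsa, mul_assoc]

end StarRing

section Rickart

variable {R : Type*} [Ring R] {p : R → R}

theorem mul_ann_self (hann : ∀ x y : R, x * y = 0 ↔ y = p x * y) {x : R}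
    (hidem : p x * p x = p x) : x * p x = 0 :=
  (hann x (p x)).2 hidem.symm

variable [StarRing R]

theorem ann_ann_mul_star_self (hproj : ∀ x : R, star (p x) = p x ∧ p x * p x = p x)
    (hann : ∀ x y : R, x * y = 0 ↔ y = p x * y) (x : R) : p (p x) * star x = star x := by
  have h : p x * star x = 0 := by
    simpa only [star_mul, (hproj x).1, star_zero] using
      congrArg star (mul_ann_self hann (hproj x).2)
  exact ((hann (p x) (star x)).1 h).symm

theorem mul_ann_ann_self (hproj : ∀ x : R, star (p x) = p x ∧ p x * p x = p x)
    (hann : ∀ x y : R, x * y = 0 ↔ y = p x * y) (x : R) : x * p (p x) = x := by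
  simpa only [star_mul, (hproj (p x)).1, star_star] using
    congrArg star (ann_ann_mul_star_self hproj hann x)

theorem ann_ann_mul_eq_zero (hproj : ∀ x : R, star (p x) = p x ∧ p x * p x = p x)
    (hann : ∀ x y : R, x * y = 0 ↔ y = p x * y) {x y : R} (h : x * y = 0) :
    p (p x) * y = 0 := by
  have hkill : p (p x) * p x = 0 := by
    simpa only [star_mul, (hproj x).1, (hproj (p x)).1, star_zero] using
      congrArg star (mul_ann_self hann (hproj (p x)).2)
  rw [(hann x y).1 h, ← mul_assoc, hkill, zero_mul]

theorem eq_mul_ann_ann_of_starLE (hproj : ∀ x : R, star (p x) = p x ∧ p x * p x = p x)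
    (hann : ∀ x y : R, x * y = 0 ↔ y = p x * y) {a b : R} (h : StarLE a b) :
    a = b * p (p a) := by
  have hdiff : a * (star b - star a) = 0 := by
    have h' : a * star b = a * star a := by
      simpa only [star_mul, star_star] using (congrArg star h.2).symm
    rw [mul_sub, h', sub_self]
  have hq : (b - a) * p (p a) = 0 := by
    simpa only [star_mul, star_sub, star_star, (hproj (p a)).1, star_zero] using
      congrArg star (ann_ann_mul_eq_zero hproj hann hdiff)
  rw [sub_mul, mul_ann_ann_self hproj hann, sub_eq_zero] at hq
  exact hq.symm

end Rickart

theorem star_le_iff_commute_general {R : Type*} [Ring R] [StarRing R]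
    (p : R → R)
    (hproj : ∀ x : R, star (p x) = p x ∧ p x * p x = p x)
    (hann : ∀ x y : R, x * y = 0 ↔ y = p x * y)
    (a b : R) :
    ((star a * a = star a * b ∧ a * star a = b * star a) ↔
      (a = b * p (p a) ∧ p (p a) * (star b * b) = (star b * b) * p (p a))) ∧
    ((star a * a = star a * b ∧ a * star a = b * star a) ↔
      (a = b * p (p a) ∧ star (star a * b) = star a * b)) := by
  have hq : IsStarProjection (p (p a)) := ⟨(hproj (p a)).2, (hproj (p a)).1⟩
  have hcomm (ha : a = b * p (p a)) := commute_star_mul_self_iff_isSelfAdjoint hq.isSelfAdjoint ha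
  have key : StarLE a b ↔ a = b * p (p a) ∧ IsSelfAdjoint (star a * b) :=
    ⟨fun h => ⟨eq_mul_ann_ann_of_starLE hproj hann h, h.isSelfAdjoint_star_mul⟩,
      fun ⟨ha, hsa⟩ => starLE_of_eq_mul_of_commute hq ha ((hcomm ha).2 hsa)⟩
  exact ⟨key.trans (and_congr_right fun ha => (hcomm ha).symm), key⟩

/-- In a Rickart *-ring with proper involution, `a ≤* b` iff `a = b a''` and
`a''` commutes with `b* b`; also iff `a = b a''` and `a* b` is self-adjoint. -/
theorem star_le_iff_commute {R : Type*} [Ring R] [StarRing R]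
    (hprop : ∀ x : R, star x * x = 0 → x = 0)
    (p : R → R)
    (hproj : ∀ x : R, star (p x) = p x ∧ p x * p x = p x)
    (hann : ∀ x y : R, x * y = 0 ↔ y = p x * y)
    (a b : R) :
    ((star a * a = star a * b ∧ a * star a = b * star a) ↔
      (a = b * p (p a) ∧ p (p a) * (star b * b) = (star b * b) * p (p a))) ∧
    ((star a * a = star a * b ∧ a * star a = b * star a) ↔
      (a = b * p (p a) ∧ star (star a * b) = star a * b)) :=
  star_le_iff_commute_general p hproj hann a b
end

section
/- In a Rickart *-ring with proper involution, if a ≤* b in the star order, then b' ≤ a' and a'' ≤ b'' as projections. -/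
/-- In a Rickart *-ring with proper involution, if `a ≤* b` then `b' ≤ a'`
and `a'' ≤ b''`. -/
theorem star_le_rp_mono {R : Type*} [Ring R] [StarRing R]
    (hprop : ∀ x : R, star x * x = 0 → x = 0)
    (p : R → R)
    (hproj : ∀ x : R, star (p x) = p x ∧ p x * p x = p x)
    (hann : ∀ x y : R, x * y = 0 ↔ y = p x * y)
    (a b : R)
    (hle : star a * a = star a * b ∧ a * star a = b * star a) :
    p a * p b = p b ∧ p (p b) * p (p a) = p (p a) := by
  -- x * p x = 0 for all x
  have hxp : ∀ x : R, x * p x = 0 := fun x => (hann x (p x)).mpr (hproj x).2.symm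
  -- a * p b = 0
  have h1 : a * p b = 0 := by
    apply hprop
    have : star (a * p b) * (a * p b) = p b * (star a * b) * p b := by
      rw [star_mul, (hproj b).1, ← hle.1]; noncomm_ring
    rw [this, mul_assoc, mul_assoc, hxp b, mul_zero, mul_zero]
  have hpab : p a * p b = p b := ((hann a (p b)).mp h1).symm
  refine ⟨hpab, ?_⟩
  have hpba : p b * p a = p b := by
    have := congrArg star hpab
    rwa [star_mul, (hproj a).1, (hproj b).1] at this
  have h2 : p b * p (p a) = 0 := by
    rw [← hpba, mul_assoc, hxp (p a), mul_zero]
  exact ((hann (p b) (p (p a))).mp h2).symm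
end

section
/- In a Rickart *-ring with proper involution, for self-adjoint elements a, b the following are equivalent: a ≤* b; a = b a''; a = a'' b; a = b e for some projection e; a = f b for some projection f. Moreover, if a ≤* b with a, b self-adjoint, then a'' b = b a'' and this element is self-adjoint. -/
/-- In a Rickart *-ring with proper involution, for self-adjoint `a, b`:
`a ≤* b`, `a = b a''`, `a = a'' b`, `a = b e` for a projection `e`, and
`a = f b` for a projection `f` are all equivalent; moreover `a ≤* b` implies
`a'' b = b a''` and this element is self-adjoint. -/
theorem star_le_self_adjoint_tfae {R : Type*} [Ring R] [StarRing R]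
    (hprop : ∀ x : R, star x * x = 0 → x = 0)
    (p : R → R)
    (hproj : ∀ x : R, star (p x) = p x ∧ p x * p x = p x)
    (hann : ∀ x y : R, x * y = 0 ↔ y = p x * y)
    (a b : R) (ha : star a = a) (hb : star b = b) :
    List.TFAE [a * a = a * b,
               a = b * p (p a),
               a = p (p a) * b,
               ∃ e, (star e = e ∧ e * e = e) ∧ a = b * e,
               ∃ f, (star f = f ∧ f * f = f) ∧ a = f * b] ∧
    (a * a = a * b →
      p (p a) * b = b * p (p a) ∧ star (p (p a) * b) = p (p a) * b) := by
  -- basic facts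
  have hxp : ∀ x : R, x * p x = 0 := fun x => (hann x (p x)).mpr (hproj x).2.symm
  have hpa_a : p a * a = 0 := by
    have := congrArg star (hxp a)
    simpa [star_mul, ha, (hproj a).1] using this
  have haa : a = p (p a) * a := (hann (p a) a).mp hpa_a
  have happa : p (p a) * p a = 0 := by
    have := congrArg star (hxp (p a))
    simpa [star_mul, (hproj a).1, (hproj (p a)).1] using this
  have hkill : ∀ y : R, a * y = 0 → p (p a) * y = 0 := by
    intro y hy
    have hy' := (hann a y).mp hy
    calc p (p a) * y = p (p a) * (p a * y) := by rw [← hy']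
      _ = p (p a) * p a * y := by rw [mul_assoc]
      _ = 0 := by rw [happa, zero_mul]
  have h13 : a * a = a * b → a = p (p a) * b := by
    intro h
    have hz : a * (a - b) = 0 := by rw [mul_sub, h, sub_self]
    have := hkill _ hz
    rw [mul_sub, sub_eq_zero] at this
    rw [← this, ← haa]
  have h32 : a = p (p a) * b → a = b * p (p a) := by
    intro h
    have := congrArg star h
    simpa [star_mul, ha, hb, (hproj (p a)).1] using this
  have h41 : (∃ e, (star e = e ∧ e * e = e) ∧ a = b * e) → a * a = a * b := by
    rintro ⟨e, ⟨he1, he2⟩, hbe⟩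
    have heb : a = e * b := by
      have := congrArg star hbe
      simpa [star_mul, ha, hb, he1] using this
    calc a * a = b * e * (e * b) := by rw [← hbe, ← heb]
      _ = b * (e * e) * b := by noncomm_ring
      _ = b * e * b := by rw [he2]
      _ = a * b := by rw [← hbe]
  have h51 : (∃ f, (star f = f ∧ f * f = f) ∧ a = f * b) → a * a = a * b := by
    rintro ⟨f, ⟨hf1, hf2⟩, hfb⟩
    have hbf : a = b * f := by
      have := congrArg star hfb
      simpa [star_mul, ha, hb, hf1] using this
    calc a * a = b * f * (f * b) := by rw [← hbf, ← hfb]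
      _ = b * (f * f) * b := by noncomm_ring
      _ = b * f * b := by rw [hf2]
      _ = a * b := by rw [← hbf]
  constructor
  · tfae_have 1 → 3 := h13
    tfae_have 3 → 2 := h32
    tfae_have 2 → 4 := fun h => ⟨p (p a), ⟨(hproj (p a)).1, (hproj (p a)).2⟩, h⟩
    tfae_have 3 → 5 := fun h => ⟨p (p a), ⟨(hproj (p a)).1, (hproj (p a)).2⟩, h⟩
    tfae_have 4 → 1 := h41
    tfae_have 5 → 1 := h51
    tfae_finish
  · intro h
    have h3 := h13 h
    have h2 := h32 h3
    refine ⟨by rw [← h3, ← h2], by rw [← h3, ha]⟩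
end

section
/- In a Rickart *-ring with proper involution, if a and b have a common upper bound x in the star order, then x (a'' ∧ b'') is the greatest lower bound of a and b, where a'' ∧ b'' is the meet of the projections a'' and b'' in the projection lattice. -/
/-- In a Rickart *-ring with proper involution, if `a, b ≤* x`, then
`x (a'' ∧ b'')` is the greatest lower bound of `a` and `b` in the star order,
where `a'' ∧ b''` is the meet of the projections `a''` and `b''` in the
projection lattice. -/
theorem star_meet_of_bounded {R : Type*} [Ring R] [StarRing R]
    (hprop : ∀ x : R, star x * x = 0 → x = 0)
    (p : R → R)
    (hproj : ∀ x : R, star (p x) = p x ∧ p x * p x = p x)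
    (hann : ∀ x y : R, x * y = 0 ↔ y = p x * y)
    (le : R → R → Prop)
    (hle : ∀ x y, le x y ↔ star x * x = star x * y ∧ x * star x = y * star x)
    (a b x : R) (hax : le a x) (hbx : le b x)
    (m : R) (hm : star m = m ∧ m * m = m)
    (hma : p (p a) * m = m) (hmb : p (p b) * m = m)
    (hmeet : ∀ g : R, (star g = g ∧ g * g = g) →
      p (p a) * g = g → p (p b) * g = g → m * g = g) :
    le (x * m) a ∧ le (x * m) b ∧ ∀ d, le d a → le d b → le d (x * m) := by
  obtain ⟨hax1, hax2⟩ := (hle a x).mp hax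
  obtain ⟨hbx1, hbx2⟩ := (hle b x).mp hbx
  obtain ⟨hms, hmi⟩ := hm
  have hstar : ∀ t : R, star (p t) = p t := fun t => (hproj t).1
  have hidem : ∀ t : R, p t * p t = p t := fun t => (hproj t).2
  have hone : ∀ t : R, t * p t = 0 := fun t => (hann t (p t)).mpr (hidem t).symm
  have hone' : ∀ t : R, p (p t) * p t = 0 := by
    intro t
    have := congrArg star (hone (p t))
    simpa [star_mul, hstar] using this
  have htwo : ∀ t : R, t * p (p t) = t := by
    intro t
    have h : p t * star t = 0 := by
      have := congrArg star (hone t)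
      simpa [star_mul, hstar] using this
    have h' := (hann (p t) (star t)).mp h
    have := congrArg star h'.symm
    simpa [star_mul, hstar] using this
  have rpmin : ∀ t q : R, t * q = t → p (p t) * q = p (p t) := by
    intro t q h
    have h0 : t * (1 - q) = 0 := by rw [mul_sub, mul_one, h, sub_self]
    have h0' := (hann t (1 - q)).mp h0
    have h1 : p (p t) * (1 - q) = 0 := by
      rw [h0', ← mul_assoc, hone' t, zero_mul]
    rw [mul_sub, mul_one] at h1
    exact (sub_eq_zero.mp h1).symm
  have rzero : ∀ t q : R, t * q = 0 → p (p t) * q = 0 := by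
    intro t q h
    rw [(hann t q).mp h, ← mul_assoc, hone' t, zero_mul]
  have commp : ∀ c z : R, star c = c → c * z = z * c → c * p z = p z * c := by
    intro c z hc hzc
    have h0 : z * (c * p z) = 0 := by
      rw [← mul_assoc, ← hzc, mul_assoc, hone z, mul_zero]
    have h0' := (hann z (c * p z)).mp h0
    have hA : p z * c = p z * c * p z := by
      have := congrArg star h0'
      simpa [star_mul, hstar, hc, mul_assoc] using this
    rw [h0', ← mul_assoc, ← hA]
  have lemA : ∀ d y : R, d * star d = y * star d → y * p (p d) = d := by
    intro d y hdy
    have h0 : (y - d) * star d = 0 := by rw [sub_mul, ← hdy, sub_self]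
    have h0' := (hann (y - d) (star d)).mp h0
    have hd : d * p (y - d) = d := by
      have := congrArg star h0'.symm
      simpa [star_mul, hstar] using this
    have h3 : p (p d) * p (y - d) = p (p d) := rpmin d _ hd
    have h4 : p (y - d) * p (p d) = p (p d) := by
      have := congrArg star h3
      simpa [star_mul, hstar] using this
    have h5 : (y - d) * p (p d) = 0 := by
      rw [← h4, ← mul_assoc, hone (y - d), zero_mul]
    rw [sub_mul] at h5
    have h6 := sub_eq_zero.mp h5
    rw [h6, htwo d]
  have absorb : ∀ d y : R, star d * d = star d * y → d * p (p y) = d := by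
    intro d y h1'
    have key : star d * d * p (p y) = star d * d := by
      rw [h1', mul_assoc, htwo y]
    have key2 : p (p y) * (star d * d) = star d * d := by
      have := congrArg star key
      simpa [star_mul, hstar, mul_assoc] using this
    have h7 : (star d - p (p y) * star d) * d = 0 := by
      rw [sub_mul, mul_assoc, key2, sub_self]
    have h8 : star (d - d * p (p y)) * (d - d * p (p y)) = 0 := by
      have hs : star (d - d * p (p y)) = star d - p (p y) * star d := by
        simp [star_sub, star_mul, hstar]
      rw [hs, mul_sub, ← mul_assoc, h7, zero_mul, sub_zero]
    have h9 := hprop _ h8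
    exact (sub_eq_zero.mp h9).symm
  -- abbreviations
  set e := p (p a) with he
  set f := p (p b) with hf
  set c := star x * x with hc
  have hes : star e = e := by rw [he]; exact hstar _
  have hfs : star f = f := by rw [hf]; exact hstar _
  have hee : e * e = e := by rw [he]; exact hidem _
  have hff : f * f = f := by rw [hf]; exact hidem _
  have hcs : star c = c := by rw [hc]; simp [star_mul]
  have hxa : star x * a = star a * a := by
    have := congrArg star hax1.symm
    simpa [star_mul] using this
  have hxb : star x * b = star b * b := by
    have := congrArg star hbx1.symm
    simpa [star_mul] using this
  have hxe : x * e = a := by rw [he]; exact lemA a x hax2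
  have hxf : x * f = b := by rw [hf]; exact lemA b x hbx2
  have hca : c * e = star a * a := by rw [hc, mul_assoc, hxe]; exact hxa
  have hcb : c * f = star b * b := by rw [hc, mul_assoc, hxf]; exact hxb
  have hac : e * c = star a * a := by
    have := congrArg star hca
    rw [star_mul, hes, hcs] at this
    simpa [star_mul, mul_assoc] using this
  have hbc : f * c = star b * b := by
    have := congrArg star hcb
    rw [star_mul, hfs, hcs] at this
    simpa [star_mul, mul_assoc] using this
  have hce : c * e = e * c := by rw [hca, hac]
  have hcf : c * f = f * c := by rw [hcb, hbc]
  -- the explicit meet g = f - r, where r = RP((1-e) f)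
  set z := (1 - e) * f with hz
  set r := p (p z) with hr
  have hrs : star r = r := by rw [hr]; exact hstar _
  have hrr : r * r = r := by rw [hr]; exact hidem _
  have hzf : z * f = z := by rw [hz, mul_assoc, hff]
  have hrf : r * f = r := by rw [hr]; exact rpmin z f hzf
  have hfr : f * r = r := by
    have := congrArg star hrf
    rw [star_mul, hrs, hfs] at this
    exact this
  have hzr : z * r = z := by rw [hr]; exact htwo z
  have h1er : (1 - e) * r = z := by rw [← hfr, ← mul_assoc, ← hz, hzr]
  have heg : e * (f - r) = f - r := by
    have h0 : (1 - e) * (f - r) = 0 := by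
      rw [mul_sub, h1er, ← hz, sub_self]
    rw [sub_mul, one_mul] at h0
    exact (sub_eq_zero.mp h0).symm
  have hgs : star (f - r) = f - r := by rw [star_sub, hfs, hrs]
  have hgg : (f - r) * (f - r) = f - r := by
    have hexp : (f - r) * (f - r) = f * f - f * r - r * f + r * r := by
      noncomm_ring
    rw [hexp, hff, hfr, hrf, hrr]; abel
  have hfg : f * (f - r) = f - r := by rw [mul_sub, hff, hfr]
  have hlow : m * (f - r) = f - r := hmeet _ ⟨hgs, hgg⟩ heg hfg
  have hzm : z * m = 0 := by
    rw [hz, mul_assoc, hmb, sub_mul, one_mul, hma, sub_self]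
  have hrm : r * m = 0 := by rw [hr]; exact rzero z m hzm
  have hgm : (f - r) * m = m := by rw [sub_mul, hmb, hrm, sub_zero]
  have hm_eq : m = f - r := by
    have h0 := congrArg star hgm
    rw [star_mul, hms, hgs] at h0
    rw [hlow] at h0
    exact h0.symm
  -- c commutes with m
  have hcz : c * z = z * c := by
    rw [hz]
    calc c * ((1 - e) * f) = (c - c * e) * f := by noncomm_ring
      _ = (c - e * c) * f := by rw [hce]
      _ = (1 - e) * (c * f) := by noncomm_ring
      _ = (1 - e) * (f * c) := by rw [hcf]
      _ = (1 - e) * f * c := by rw [mul_assoc]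
  have hcpz : c * p z = p z * c := commp c z hcs hcz
  have hcr : c * r = r * c := by
    rw [hr]; exact commp c (p z) hcs hcpz
  have hcg : c * (f - r) = (f - r) * c := by
    rw [mul_sub, sub_mul, hcf, hcr]
  have hcm : c * m = m * c := by rw [hm_eq]; exact hcg
  -- auxiliary m facts
  have hme : m * e = m := by
    have := congrArg star hma
    rw [star_mul, hms, hes] at this
    exact this
  have hmf : m * f = m := by
    have := congrArg star hmb
    rw [star_mul, hms, hfs] at this
    exact this
  have hmcm : m * c * m = m * c := by
    rw [← hcm, mul_assoc, hmi]
  have hsxm : star (x * m) = m * star x := by rw [star_mul, hms]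
  have key_mca : m * (star a * a) = m * c := by
    rw [← hac, ← mul_assoc, hme]
  have key_mcb : m * (star b * b) = m * c := by
    rw [← hbc, ← mul_assoc, hmf]
  have hxma : x * m = a * m := by
    calc x * m = x * (e * m) := by rw [hma]
      _ = x * e * m := by rw [mul_assoc]
      _ = a * m := by rw [hxe]
  have hxmb : x * m = b * m := by
    calc x * m = x * (f * m) := by rw [hmb]
      _ = x * f * m := by rw [mul_assoc]
      _ = b * m := by rw [hxf]
  have claim1 : le (x * m) a := by
    rw [hle]
    constructor
    · rw [hsxm]
      calc m * star x * (x * m) = m * (star x * x) * m := by noncomm_ring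
        _ = m * c * m := by rw [← hc]
        _ = m * c := hmcm
        _ = m * (star a * a) := key_mca.symm
        _ = m * (star x * a) := by rw [hxa]
        _ = m * star x * a := by rw [mul_assoc]
    · rw [hsxm]
      calc x * m * (m * star x) = x * (m * m) * star x := by noncomm_ring
        _ = x * m * star x := by rw [hmi]
        _ = a * m * star x := by rw [hxma]
        _ = a * (m * star x) := by rw [mul_assoc]
  have claim2 : le (x * m) b := by
    rw [hle]
    constructor
    · rw [hsxm]
      calc m * star x * (x * m) = m * (star x * x) * m := by noncomm_ring
        _ = m * c * m := by rw [← hc]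
        _ = m * c := hmcm
        _ = m * (star b * b) := key_mcb.symm
        _ = m * (star x * b) := by rw [hxb]
        _ = m * star x * b := by rw [mul_assoc]
    · rw [hsxm]
      calc x * m * (m * star x) = x * (m * m) * star x := by noncomm_ring
        _ = x * m * star x := by rw [hmi]
        _ = b * m * star x := by rw [hxmb]
        _ = b * (m * star x) := by rw [mul_assoc]
  refine ⟨claim1, claim2, ?_⟩
  intro d hda hdb
  obtain ⟨hd1, hd2⟩ := (hle d a).mp hda
  obtain ⟨hd1b, hd2b⟩ := (hle d b).mp hdb
  have hda2 : d * e = d := by rw [he]; exact absorb d a hd1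
  have hdb2 : d * f = d := by rw [hf]; exact absorb d b hd1b
  have hd_e : e * p (p d) = p (p d) := by
    have h := rpmin d e hda2
    have h' := congrArg star h
    rw [star_mul, hes, hstar (p d)] at h'
    exact h'
  have hd_f : f * p (p d) = p (p d) := by
    have h := rpmin d f hdb2
    have h' := congrArg star h
    rw [star_mul, hfs, hstar (p d)] at h'
    exact h'
  have hmd : m * p (p d) = p (p d) := hmeet _ ⟨hstar _, hidem _⟩ hd_e hd_f
  have hdm2 : p (p d) * m = p (p d) := by
    have := congrArg star hmd
    rw [star_mul, hms, hstar (p d)] at this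
    exact this
  have hdm : d * m = d := by
    calc d * m = d * p (p d) * m := by rw [htwo d]
      _ = d * (p (p d) * m) := by rw [mul_assoc]
      _ = d * p (p d) := by rw [hdm2]
      _ = d := htwo d
  have hmsd : m * star d = star d := by
    have := congrArg star hdm
    rw [star_mul, hms] at this
    exact this
  have had : a * p (p d) = d := lemA d a hd2
  have hsd : star d = p (p d) * star a := by
    have := congrArg star had
    rw [star_mul, hstar (p d)] at this
    exact this.symm
  have hsdx : star d * x = star d * d := by
    calc star d * x = p (p d) * (star a * x) := by rw [hsd, mul_assoc]
      _ = p (p d) * (star a * a) := by rw [← hax1]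
      _ = p (p d) * star a * a := by rw [mul_assoc]
      _ = star d * a := by rw [← hsd]
      _ = star d * d := by rw [← hd1]
  rw [hle]
  constructor
  · calc star d * d = star d * d * m := by rw [mul_assoc, hdm]
      _ = star d * x * m := by rw [hsdx]
      _ = star d * (x * m) := by rw [mul_assoc]
  · calc d * star d = a * star d := hd2
      _ = a * (m * star d) := by rw [hmsd]
      _ = a * m * star d := by rw [mul_assoc]
      _ = x * m * star d := by rw [← hxma]
end

section
/- In a Rickart *-ring R with proper involution, R is a lower semilattice under the star order if and only if there exists a binary operation ∸ (a 'star minus') on R satisfying: (a) x − (x ∸ y) ≤* y; (b) x ≤* y implies z ∸ y ≤* z ∸ x for all z; (c) y ≤* x implies x ∸ y = x − y. Moreover, in that case x ∸ y = x (x ∧ y)' and (x ∧ y) + (x ∸ y) = x, where x ∧ y is the star-order meet. -/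
/-- In a Rickart *-ring with proper involution, `R` is a lower semilattice
under the star order iff it admits a star-minus operation; in that case
`x ∸ y = x (x ∧ y)'` and `(x ∧ y) + (x ∸ y) = x`. -/
theorem lower_semilattice_iff_star_minus {R : Type*} [Ring R] [StarRing R]
    (hprop : ∀ x : R, star x * x = 0 → x = 0)
    (p : R → R)
    (hproj : ∀ x : R, star (p x) = p x ∧ p x * p x = p x)
    (hann : ∀ x y : R, x * y = 0 ↔ y = p x * y)
    (le : R → R → Prop)
    (hle : ∀ x y, le x y ↔ star x * x = star x * y ∧ x * star x = y * star x) :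
    ((∀ a b : R, ∃ m : R, le m a ∧ le m b ∧ ∀ u, le u a → le u b → le u m) ↔
      (∃ sm : R → R → R,
        (∀ x y, le (x - sm x y) y) ∧
        (∀ x y z, le x y → le (sm z y) (sm z x)) ∧
        (∀ x y, le y x → sm x y = x - y))) ∧
    (∀ sm : R → R → R,
      (∀ x y, le (x - sm x y) y) →
      (∀ x y z, le x y → le (sm z y) (sm z x)) →
      (∀ x y, le y x → sm x y = x - y) →
      ∀ x y m : R, (le m x ∧ le m y ∧ ∀ u, le u x → le u y → le u m) →
        sm x y = x * p m ∧ m + sm x y = x) := by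
  have hps : ∀ x : R, star (p x) = p x := fun x => (hproj x).1
  have hpp : ∀ x : R, p x * p x = p x := fun x => (hproj x).2
  have hxp : ∀ x : R, x * p x = 0 := fun x => (hann x (p x)).mpr (hpp x).symm
  have le_refl : ∀ x : R, le x x := fun x => by simp [hle]
  have zero_le : ∀ x : R, le 0 x := fun x => by simp [hle]
  -- basic consequences of `le m x`
  have z1 : ∀ m x : R, le m x → star m * (x - m) = 0 := by
    intro m x h
    rw [hle] at h
    rw [mul_sub, ← h.1, sub_self]
  have z2 : ∀ m x : R, le m x → (x - m) * star m = 0 := by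
    intro m x h
    rw [hle] at h
    rw [sub_mul, ← h.2, sub_self]
  have z3 : ∀ m x : R, le m x → m * star (x - m) = 0 := by
    intro m x h
    calc m * star (x - m) = star ((x - m) * star m) := by rw [star_mul, star_star]
    _ = 0 := by rw [z2 m x h, star_zero]
  have z4 : ∀ m x : R, le m x → star (x - m) * m = 0 := by
    intro m x h
    calc star (x - m) * m = star (star m * (x - m)) := by rw [star_mul, star_star]
    _ = 0 := by rw [z1 m x h, star_zero]
  -- key annihilator identities
  have aux1 : ∀ m x : R, le m x → x * p m = x - m := by
    intro m x h
    have e2 : x - m = (x - m) * p m := by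
      have e := (hann m (star (x - m))).mp (z3 m x h)
      calc x - m = star (star (x - m)) := (star_star _).symm
      _ = star (p m * star (x - m)) := by rw [← e]
      _ = (x - m) * p m := by rw [star_mul, star_star, hps]
    calc x * p m = m * p m + (x - m) * p m := by noncomm_ring
    _ = x - m := by rw [hxp, zero_add, ← e2]
  have aux1' : ∀ m x : R, le m x → p (star m) * x = x - m := by
    intro m x h
    have e2 : x - m = p (star m) * (x - m) := (hann (star m) (x - m)).mp (z1 m x h)
    have e3 : p (star m) * m = 0 := by
      calc p (star m) * m = star (star m * p (star m)) := by
            rw [star_mul, hps, star_star]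
      _ = 0 := by rw [hxp, star_zero]
    calc p (star m) * x = p (star m) * m + p (star m) * (x - m) := by noncomm_ring
    _ = x - m := by rw [e3, zero_add, ← e2]
  -- complements: le m x → le (x - m) x
  have le_sub : ∀ m x : R, le m x → le (x - m) x := by
    intro m x h
    rw [hle]
    constructor
    · have split : star (x - m) * x = star (x - m) * (x - m) + star (x - m) * m := by
        noncomm_ring
      rw [split, z4 m x h, add_zero]
    · have split : x * star (x - m) = (x - m) * star (x - m) + m * star (x - m) := by
        noncomm_ring
      rw [split, z3 m x h, add_zero]
  -- transitivity
  have le_trans : ∀ a b c : R, le a b → le b c → le a c := by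
    intro a b c hab hbc
    have r1 : a = b * (1 - p a) := by
      rw [mul_sub, mul_one, aux1 a b hab, sub_sub_cancel]
    have r2 : a = (1 - p (star a)) * b := by
      rw [sub_mul, one_mul, aux1' a b hab, sub_sub_cancel]
    have hab' := (hle a b).mp hab
    have hbc' := (hle b c).mp hbc
    rw [hle]
    constructor
    · have sa : star a = (1 - p a) * star b := by
        calc star a = star (b * (1 - p a)) := congrArg star r1
        _ = (1 - p a) * star b := by rw [star_mul, star_sub, star_one, hps]
      calc star a * a = star a * b := hab'.1
      _ = (1 - p a) * star b * b := by rw [sa]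
      _ = (1 - p a) * (star b * b) := by rw [mul_assoc]
      _ = (1 - p a) * (star b * c) := by rw [hbc'.1]
      _ = (1 - p a) * star b * c := by rw [mul_assoc]
      _ = star a * c := by rw [← sa]
    · have sa : star a = star b * (1 - p (star a)) := by
        calc star a = star ((1 - p (star a)) * b) := congrArg star r2
        _ = star b * (1 - p (star a)) := by rw [star_mul, star_sub, star_one, hps]
      calc a * star a = b * star a := hab'.2
      _ = b * star b * (1 - p (star a)) := by rw [mul_assoc, ← sa]
      _ = c * star b * (1 - p (star a)) := by rw [hbc'.2]
      _ = c * star a := by rw [mul_assoc, ← sa]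
  -- antisymmetry
  have le_antisymm : ∀ a b : R, le a b → le b a → a = b := by
    intro a b hab hba
    have hab' := (hle a b).mp hab
    have hba' := (hle b a).mp hba
    have key : star (a - b) * (a - b) =
        (star a * a - star a * b) + (star b * b - star b * a) := by
      rw [star_sub]; noncomm_ring
    rw [hab'.1, hba'.1, sub_self, sub_self, add_zero] at key
    exact sub_eq_zero.mp (hprop _ key)
  -- antitone complementation
  have le_sub_le : ∀ a b z : R, le a b → le b z → le (z - b) (z - a) := by
    intro a b z hab hbz
    have hba : le (b - a) b := le_sub a b hab
    have r1 : b * (1 - p (b - a)) = b - a := by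
      rw [mul_sub, mul_one, aux1 (b - a) b hba, sub_sub_cancel]
    have r2 : (1 - p (star (b - a))) * b = b - a := by
      rw [sub_mul, one_mul, aux1' (b - a) b hba, sub_sub_cancel]
    rw [hle]
    constructor
    · have split : star (z - b) * (z - a) =
          star (z - b) * (z - b) + star (z - b) * (b - a) := by noncomm_ring
      rw [split, ← r1, ← mul_assoc, z4 b z hbz, zero_mul, add_zero]
    · have split : (z - a) * star (z - b) =
          (z - b) * star (z - b) + (b - a) * star (z - b) := by noncomm_ring
      rw [split, ← r2, mul_assoc, z3 b z hbz, mul_zero, add_zero]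
  -- orthogonality of a lower bound and an element below the complement
  have key_orth : ∀ u x s : R, le u x → le s (x - u) →
      star u * s = 0 ∧ s * star u = 0 := by
    intro u x s hux hs
    have r1 : (x - u) * (1 - p s) = s := by
      rw [mul_sub, mul_one, aux1 s (x - u) hs, sub_sub_cancel]
    have r2 : (1 - p (star s)) * (x - u) = s := by
      rw [sub_mul, one_mul, aux1' s (x - u) hs, sub_sub_cancel]
    constructor
    · rw [← r1, ← mul_assoc, z1 u x hux, zero_mul]
    · rw [← r2, mul_assoc, z2 u x hux, mul_zero]
  -- the core computation: a star-minus necessarily equals x - (x ∧ y)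
  have meet_core : ∀ sm : R → R → R,
      (∀ x y, le (x - sm x y) y) →
      (∀ x y z, le x y → le (sm z y) (sm z x)) →
      (∀ x y, le y x → sm x y = x - y) →
      ∀ x y m : R, le m x → le m y → (∀ u, le u x → le u y → le u m) →
        sm x y = x - m := by
    intro sm ha hb hc x y m hmx hmy hgr
    have hsv : le (sm x y) (x - m) := by
      have h := hb m y x hmy
      rwa [hc x m hmx] at h
    have hvx : le (x - m) x := le_sub m x hmx
    have hsx : le (sm x y) x := le_trans _ _ _ hsv hvx
    have hum : le (x - sm x y) m := hgr _ (le_sub (sm x y) x hsx) (ha x y)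
    set s := sm x y with hsdef
    set w := m - (x - s) with hwdef
    have hw1 : star w * w = star w * m := ((hle _ _).mp (le_sub (x - s) m hum)).1
    have hw2 : star w * w = -(star w * (x - m)) := by
      have h := ((hle _ _).mp (le_sub s (x - m) hsv)).1
      have hneg : (x - m) - s = -w := by rw [hwdef]; abel
      rwa [hneg, star_neg, neg_mul_neg, neg_mul] at h
    have hwx : star w * x = 0 := by
      have split : star w * x = star w * m + star w * (x - m) := by noncomm_ring
      have h3 : star w * (x - m) = -(star w * w) := by rw [hw2, neg_neg]
      rw [split, ← hw1, h3, add_neg_cancel]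
    have hwm : star w * m = 0 := by
      have r : x * (1 - p m) = m := by
        rw [mul_sub, mul_one, aux1 m x hmx, sub_sub_cancel]
      rw [← r, ← mul_assoc, hwx, zero_mul]
    have hw0 : w = 0 := hprop w (by rw [hw1, hwm])
    rw [hwdef, sub_eq_zero] at hw0
    rw [hw0]
    exact (sub_sub_cancel x s).symm
  constructor
  · constructor
    · -- semilattice → star-minus exists
      intro h
      refine ⟨fun a b => a - Classical.choose (h a b), ?_, ?_, ?_⟩
      · intro x y
        rw [sub_sub_cancel]
        exact (Classical.choose_spec (h x y)).2.1
      · intro x y z hxy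
        have hMx := Classical.choose_spec (h z x)
        have hMy := Classical.choose_spec (h z y)
        have h1 : le (Classical.choose (h z x)) (Classical.choose (h z y)) :=
          hMy.2.2 _ hMx.1 (le_trans _ _ _ hMx.2.1 hxy)
        exact le_sub_le _ _ _ h1 hMy.1
      · intro x y hyx
        have hM := Classical.choose_spec (h x y)
        have heq : Classical.choose (h x y) = y :=
          le_antisymm _ _ hM.2.1 (hM.2.2 y hyx (le_refl y))
        show x - Classical.choose (h x y) = x - y
        rw [heq]
    · -- star-minus exists → semilattice
      rintro ⟨sm, ha, hb, hc⟩ a b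
      have hs_le : le (sm a b) a := by
        have h := hb 0 b a (zero_le b)
        rwa [hc a 0 (zero_le a), sub_zero] at h
      refine ⟨a - sm a b, le_sub _ _ hs_le, ha a b, ?_⟩
      intro u hua hub
      have h2 : le (sm a b) (a - u) := by
        have h := hb u b a hub
        rwa [hc a u hua] at h
      obtain ⟨o1, o2⟩ := key_orth u a (sm a b) hua h2
      have hua' := (hle u a).mp hua
      rw [hle]
      constructor
      · rw [mul_sub, o1, sub_zero, ← hua'.1]
      · rw [sub_mul, o2, sub_zero, ← hua'.2]
  · -- the explicit formulas
    intro sm ha hb hc x y m ⟨hmx, hmy, hgr⟩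
    have hs : sm x y = x - m := meet_core sm ha hb hc x y m hmx hmy hgr
    constructor
    · rw [hs, aux1 m x hmx]
    · rw [hs, add_sub_cancel]
end
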